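/- arXiv:1609.01441 — 5 statements merged into one kernel-verified Lean document; each statement's English description precedes it below -/
import Mathlib

section
/- Let f : (0,∞) → ℝ be a continuous nonnegative function such that (1/x)·ln f(x) → 0 as x → +∞ and f'/f is bounded on (0,∞) (f is differentiable and positive). Then liminf_{R→+∞} f(R) / ∫₀^R f(x) dx = 0. -/
/-!
If `f R / ∫₀^R f ≥ ε` for all large `R`, then `I(R) = ∫₀^R f` satisfies `I' ≥ ε I`, so `I`, and
with it `f ≥ ε I`, grows at least like `e^{εR}`; this contradicts `(ln f R) / R → 0`. The bound on
`f'/f` makes `ln f` Lipschitz, so `f` is locally bounded near `0` and `I` is finite.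
-/

open Filter MeasureTheory Topology Set Real

section LogDerivBound

variable {f : ℝ → ℝ} {M : ℝ}

theorem le_mul_exp_of_abs_logDeriv_le (hf_pos : ∀ x ∈ Ioi (0 : ℝ), 0 < f x)
    (hf_diff : ∀ x ∈ Ioi (0 : ℝ), DifferentiableAt ℝ f x)
    (hbound : ∀ x ∈ Ioi (0 : ℝ), |deriv f x / f x| ≤ M) {a x : ℝ} (ha : 0 < a) (hx : 0 < x) :
    f x ≤ f a * exp (M * |x - a|) := by
  have hlip : |log (f x) - log (f a)| ≤ M * |x - a| :=
    (convex_Ioi 0).norm_image_sub_le_of_norm_hasDerivWithin_le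
      (f := fun y => log (f y)) (f' := fun y => deriv f y / f y)
      (fun y hy => ((hf_diff y hy).hasDerivAt.log (hf_pos y hy).ne').hasDerivWithinAt)
      hbound ha hx
  calc f x = exp (log (f x)) := (exp_log (hf_pos x hx)).symm
    _ ≤ exp (log (f a) + M * |x - a|) := exp_le_exp.mpr (by linarith [(abs_le.mp hlip).2])
    _ = f a * exp (M * |x - a|) := by rw [exp_add, exp_log (hf_pos a ha)]

theorem integrableOn_Ioo_zero_of_abs_logDeriv_le (hf_pos : ∀ x ∈ Ioi (0 : ℝ), 0 < f x)
    (hf_diff : ∀ x ∈ Ioi (0 : ℝ), DifferentiableAt ℝ f x)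
    (hbound : ∀ x ∈ Ioi (0 : ℝ), |deriv f x / f x| ≤ M) (R : ℝ) :
    IntegrableOn f (Ioo 0 R) := by
  have hg : IntegrableOn (fun x => f 1 * exp (M * |x - 1|)) (Icc 0 R) :=
    (by fun_prop : Continuous fun x => f 1 * exp (M * |x - 1|)).integrableOn_Icc
  have hf_cont : ContinuousOn f (Ioo 0 R) := fun x hx =>
    (hf_diff x hx.1).continuousAt.continuousWithinAt
  refine (hg.mono_set Ioo_subset_Icc_self).mono' (hf_cont.aestronglyMeasurable measurableSet_Ioo) ?_
  filter_upwards [ae_restrict_mem measurableSet_Ioo] with x hx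
  rw [norm_of_nonneg (hf_pos x hx.1).le]
  exact le_mul_exp_of_abs_logDeriv_le hf_pos hf_diff hbound one_pos hx.1

end LogDerivBound

section Primitive

variable {f : ℝ → ℝ}

theorem integral_Ioo_eq_intervalIntegral {a b : ℝ} (hab : a ≤ b) :
    ∫ x in Ioo a b, f x = ∫ x in a..b, f x := by
  rw [intervalIntegral.integral_of_le hab, integral_Ioc_eq_integral_Ioo]

theorem hasDerivAt_integral_Ioo_zero (hf_cont : ContinuousOn f (Ioi 0))
    (hf_int : ∀ R, IntegrableOn f (Ioo 0 R)) {R : ℝ} (hR : 0 < R) :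
    HasDerivAt (fun r => ∫ x in Ioo 0 r, f x) (f R) R := by
  have hderiv : HasDerivAt (fun r => ∫ x in (0 : ℝ)..r, f x) (f R) R :=
    intervalIntegral.integral_hasDerivAt_right
      ((intervalIntegrable_iff_integrableOn_Ioo_of_le hR.le).mpr (hf_int R))
      (hf_cont.stronglyMeasurableAtFilter isOpen_Ioi R hR)
      (hf_cont.continuousAt (isOpen_Ioi.mem_nhds hR))
  refine hderiv.congr_of_eventuallyEq ?_
  filter_upwards [isOpen_Ioi.mem_nhds hR] with r (hr : (0 : ℝ) < r)
  exact integral_Ioo_eq_intervalIntegral hr.le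

theorem integral_Ioo_zero_pos {R : ℝ} (hf_pos : ∀ x ∈ Ioi (0 : ℝ), 0 < f x)
    (hf_int : IntegrableOn f (Ioo 0 R)) (hR : 0 < R) : 0 < ∫ x in Ioo 0 R, f x := by
  rw [integral_Ioo_eq_intervalIntegral hR.le]
  exact intervalIntegral.intervalIntegral_pos_of_pos_on
    ((intervalIntegrable_iff_integrableOn_Ioo_of_le hR.le).mpr hf_int)
    (fun x hx => hf_pos x hx.1) hR

end Primitive

/-- Grönwall's inequality from below: `F x * exp (-ε x)` is monotone. -/
theorem mul_exp_le_of_hasDerivAt_of_mul_le {F F' : ℝ → ℝ} {a ε : ℝ}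
    (hF : ∀ x ∈ Ici a, HasDerivAt F (F' x) x) (hle : ∀ x ∈ Ici a, ε * F x ≤ F' x)
    {R : ℝ} (hR : a ≤ R) : F a * exp (ε * (R - a)) ≤ F R := by
  set G : ℝ → ℝ := fun x => F x * exp (-(ε * x))
  have hG : ∀ x ∈ Ici a, HasDerivAt G ((F' x - ε * F x) * exp (-(ε * x))) x := fun x hx => by
    have hexp : HasDerivAt (fun y => exp (-(ε * y))) (exp (-(ε * x)) * -(ε * 1)) x :=
      ((hasDerivAt_id x).const_mul ε).neg.exp
    exact ((hF x hx).mul hexp).congr_deriv (by ring)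
  have hmono : MonotoneOn G (Ici a) :=
    monotoneOn_of_hasDerivWithinAt_nonneg (convex_Ici a)
      (fun x hx => (hG x hx).continuousAt.continuousWithinAt)
      (fun x hx => (hG x (interior_subset hx)).hasDerivWithinAt)
      (fun x hx => mul_nonneg (sub_nonneg.mpr (hle x (interior_subset hx))) (exp_pos _).le)
  calc F a * exp (ε * (R - a)) = G a * exp (ε * R) := by
        simp only [G, mul_assoc, ← exp_add]; ring_nf
    _ ≤ G R * exp (ε * R) := by gcongr; exact hmono self_mem_Ici hR hR
    _ = F R := by simp only [G, mul_assoc, ← exp_add]; simp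

theorem not_tendsto_log_div_of_mul_exp_le {g : ℝ → ℝ} {c ε : ℝ} (hc : 0 < c) (hε : 0 < ε)
    (hg : ∀ᶠ R in atTop, c * exp (ε * R) ≤ g R) :
    ¬ Tendsto (fun R => log (g R) / R) atTop (𝓝 0) := by
  intro hlim
  have hlow : Tendsto (fun R => log c / R + ε) atTop (𝓝 (0 + ε)) :=
    (tendsto_const_nhds.div_atTop tendsto_id).add tendsto_const_nhds
  have hle : ∀ᶠ R in atTop, log c / R + ε ≤ log (g R) / R := by
    filter_upwards [hg, eventually_gt_atTop 0] with R hR hRpos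
    have hlog : log c + ε * R ≤ log (g R) :=
      calc log c + ε * R = log (c * exp (ε * R)) := by rw [log_mul hc.ne' (exp_pos _).ne', log_exp]
        _ ≤ log (g R) := log_le_log (by positivity) hR
    calc log c / R + ε = (log c + ε * R) / R := by field_simp
      _ ≤ log (g R) / R := by gcongr
  linarith [le_of_tendsto_of_tendsto hlow hlim hle]

theorem frequently_div_le_of_tendsto_log_div {f F : ℝ → ℝ}
    (hF : ∀ᶠ R in atTop, HasDerivAt F (f R) R) (hF_pos : ∀ᶠ R in atTop, 0 < F R)
    (hlog : Tendsto (fun R => log (f R) / R) atTop (𝓝 0)) {ε : ℝ} (hε : 0 < ε) :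
    ∃ᶠ R in atTop, f R / F R ≤ ε := by
  by_contra hcon
  rw [not_frequently] at hcon
  obtain ⟨a, ha⟩ := eventually_atTop.mp (hF.and (hF_pos.and hcon))
  have hle : ∀ R ∈ Ici a, ε * F R ≤ f R := fun R hR => by
    obtain ⟨-, hpos, hgt⟩ := ha R hR
    exact ((lt_div_iff₀ hpos).mp (not_le.mp hgt)).le
  refine not_tendsto_log_div_of_mul_exp_le (c := ε * F a * exp (-(ε * a)))
    (by have := (ha a le_rfl).2.1; positivity) hε ?_ hlog
  filter_upwards [eventually_ge_atTop a] with R hR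
  calc ε * F a * exp (-(ε * a)) * exp (ε * R) = ε * (F a * exp (ε * (R - a))) := by
        rw [mul_assoc, ← exp_add]; ring_nf
    _ ≤ ε * F R := by
        gcongr; exact mul_exp_le_of_hasDerivAt_of_mul_le (fun x hx => (ha x hx).1) hle hR
    _ ≤ f R := hle R hR

theorem liminf_eq_zero_of_frequently_le {α : Type*} {l : Filter α} {u : α → ℝ}
    (h_nonneg : ∀ᶠ x in l, 0 ≤ u x) (h : ∀ ε > 0, ∃ᶠ x in l, u x ≤ ε) : liminf u l = 0 :=
  le_antisymm
    (le_of_forall_gt_imp_ge_of_dense fun ε hε =>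
      liminf_le_of_frequently_le (h ε hε) ⟨0, eventually_map.mpr h_nonneg⟩)
    (le_liminf_of_le (IsCoboundedUnder.of_frequently_le (h 1 one_pos)) h_nonneg)

theorem stmt_0_general (f : ℝ → ℝ)
    (hf_pos : ∀ x ∈ Set.Ioi (0 : ℝ), 0 < f x)
    (hf_diff : ∀ x ∈ Set.Ioi (0 : ℝ), DifferentiableAt ℝ f x)
    (M : ℝ)
    (hbound : ∀ x ∈ Set.Ioi (0 : ℝ), |deriv f x / f x| ≤ M)
    (hlog : Tendsto (fun x => Real.log (f x) / x) atTop (𝓝 0)) :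
    liminf (fun R => f R / ∫ x in Set.Ioo (0 : ℝ) R, f x) atTop = 0 := by
  have hf_cont : ContinuousOn f (Ioi 0) := fun x hx =>
    (hf_diff x hx).continuousAt.continuousWithinAt
  have hf_int := integrableOn_Ioo_zero_of_abs_logDeriv_le hf_pos hf_diff hbound
  have hI_pos : ∀ᶠ R in atTop, 0 < ∫ x in Ioo 0 R, f x := by
    filter_upwards [eventually_gt_atTop 0] with R hR using integral_Ioo_zero_pos hf_pos (hf_int R) hR
  refine liminf_eq_zero_of_frequently_le ?_
    fun ε hε => frequently_div_le_of_tendsto_log_div ?_ hI_pos hlog hε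
  · filter_upwards [eventually_gt_atTop 0, hI_pos] with R hR hI
    exact div_nonneg (hf_pos R hR).le hI.le
  · filter_upwards [eventually_gt_atTop 0] with R hR
    exact hasDerivAt_integral_Ioo_zero hf_cont hf_int hR

/-- If `f` is positive and continuously differentiable on `(0,∞)`, with `f'/f` bounded
and `(ln f x)/x → 0` as `x → ∞`, then `liminf_{R→∞} f(R) / ∫₀^R f = 0`. -/
theorem stmt_0 (f : ℝ → ℝ)
    (hf_pos : ∀ x ∈ Set.Ioi (0 : ℝ), 0 < f x)
    (hf_cont : ContinuousOn f (Set.Ioi 0))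
    (hf_diff : ∀ x ∈ Set.Ioi (0 : ℝ), DifferentiableAt ℝ f x)
    (hf_deriv_cont : ContinuousOn (deriv f) (Set.Ioi 0))
    (M : ℝ) (hM : 0 < M)
    (hbound : ∀ x ∈ Set.Ioi (0 : ℝ), |deriv f x / f x| ≤ M)
    (hlog : Tendsto (fun x => Real.log (f x) / x) atTop (𝓝 0)) :
    liminf (fun R => f R / ∫ x in Set.Ioo (0 : ℝ) R, f x) atTop = 0 :=
  stmt_0_general f hf_pos hf_diff M hbound hlog
end

section
/- Let (Ω, μ) be a probability space and ã : Ω → ℝ a measurable function with 0 < m ≤ ã ≤ M almost everywhere. Fix p ∈ ℝ. Among all θ ∈ L²(Ω) with ∫ θ dμ = 0, the quantity ∫ ã·(p+θ)² dμ is minimized by θ₀ = p·(1/(ã·∫(1/ã)dμ) − 1), and the minimum value equals p² / ∫ (1/ã) dμ. -/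
/-!
Pointwise AM-GM gives `a f² ≥ 2 c f - c² / a` for every `c`; integrating with `∫ f = p` and
`c = p / ∫ (1/a)` yields `∫ a f² ≥ p² / ∫ (1/a)`, a weighted Cauchy–Schwarz inequality.
Equality holds when `a f = c`, which is the case for `f = p + θ₀`.
-/

open MeasureTheory

lemma two_mul_mul_le_mul_sq_add_sq_div {a : ℝ} (ha : 0 < a) (c f : ℝ) :
    2 * c * f ≤ a * f ^ 2 + c ^ 2 / a := by
  have key : a * f ^ 2 + c ^ 2 / a - 2 * c * f = (a * f - c) ^ 2 / a := by
    field_simp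
    ring
  linarith [div_nonneg (sq_nonneg (a * f - c)) ha.le]

section Weighted

variable {Ω : Type*} [MeasurableSpace Ω] {μ : Measure Ω} {a : Ω → ℝ}

lemma memLp_one_div_of_le {m : ℝ} [IsFiniteMeasure μ] (hm : 0 < m)
    (ha : AEMeasurable a μ) (hle : ∀ᵐ ω ∂μ, m ≤ a ω) (q : ENNReal) :
    MemLp (fun ω => 1 / a ω) q μ := by
  refine MemLp.of_bound (ha.const_div 1).aestronglyMeasurable (1 / m) ?_
  filter_upwards [hle] with ω hω
  rw [Real.norm_eq_abs, abs_of_nonneg (one_div_nonneg.mpr (hm.le.trans hω))]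
  exact one_div_le_one_div_of_le hm hω

lemma one_div_le_integral_one_div {M : ℝ} [IsProbabilityMeasure μ]
    (hw : Integrable (fun ω => 1 / a ω) μ) (hbd : ∀ᵐ ω ∂μ, 0 < a ω ∧ a ω ≤ M) :
    1 / M ≤ ∫ ω, 1 / a ω ∂μ := by
  have hmono : ∫ _ω, 1 / M ∂μ ≤ ∫ ω, 1 / a ω ∂μ := by
    refine integral_mono_ae (integrable_const _) hw ?_
    filter_upwards [hbd] with ω hω
    exact one_div_le_one_div_of_le hω.1 hω.2
  simpa using hmono

lemma sq_integral_div_integral_one_div_le {f : Ω → ℝ} (hpos : ∀ᵐ ω ∂μ, 0 < a ω)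
    (hf : Integrable f μ) (haf : Integrable (fun ω => a ω * f ω ^ 2) μ)
    (hw : Integrable (fun ω => 1 / a ω) μ) (hI : 0 < ∫ ω, 1 / a ω ∂μ) :
    (∫ ω, f ω ∂μ) ^ 2 / ∫ ω, 1 / a ω ∂μ ≤ ∫ ω, a ω * f ω ^ 2 ∂μ := by
  set I := ∫ ω, 1 / a ω ∂μ with hI_def
  set c := (∫ ω, f ω ∂μ) / I with hc_def
  have hlower : Integrable (fun ω => 2 * c * f ω - c ^ 2 * (1 / a ω)) μ :=
    (hf.const_mul _).sub (hw.const_mul _)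
  have hpointwise : ∀ᵐ ω ∂μ, 2 * c * f ω - c ^ 2 * (1 / a ω) ≤ a ω * f ω ^ 2 := by
    filter_upwards [hpos] with ω hω
    have := two_mul_mul_le_mul_sq_add_sq_div hω c (f ω)
    rw [mul_one_div]
    linarith
  calc (∫ ω, f ω ∂μ) ^ 2 / I
      = ∫ ω, 2 * c * f ω - c ^ 2 * (1 / a ω) ∂μ := by
        rw [integral_sub (hf.const_mul _) (hw.const_mul _), integral_const_mul,
          integral_const_mul, ← hI_def, hc_def]
        field_simp
        ring
    _ ≤ ∫ ω, a ω * f ω ^ 2 ∂μ := integral_mono_ae hlower haf hpointwise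

lemma integral_mul_sq_const_mul_one_div (hne : ∀ᵐ ω ∂μ, a ω ≠ 0) (c : ℝ) :
    ∫ ω, a ω * (c * (1 / a ω)) ^ 2 ∂μ = c ^ 2 * ∫ ω, 1 / a ω ∂μ := by
  rw [← integral_const_mul]
  refine integral_congr_ae ?_
  filter_upwards [hne] with ω hω
  field_simp

end Weighted

/-- On a probability space, among zero-mean `θ ∈ L²`, the functional
`θ ↦ ∫ ã (p+θ)²` is minimized by `θ₀ = p (1/(ã ∫(1/ã)) − 1)`, with minimal
value `p² / ∫ (1/ã)`. -/
theorem stmt_3 {Ω : Type*} [MeasurableSpace Ω] (μ : Measure Ω) [IsProbabilityMeasure μ]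
    (a : Ω → ℝ) (ha_meas : Measurable a) (m M : ℝ) (hm : 0 < m) (hmM : m ≤ M)
    (hbd : ∀ᵐ ω ∂μ, m ≤ a ω ∧ a ω ≤ M) (p : ℝ) :
    let θ₀ : Ω → ℝ := fun ω => p * (1 / (a ω * ∫ ω', (1 / a ω') ∂μ) - 1)
    MemLp θ₀ 2 μ ∧ (∫ ω, θ₀ ω ∂μ) = 0 ∧
      (∫ ω, a ω * (p + θ₀ ω) ^ 2 ∂μ) = p ^ 2 / ∫ ω, (1 / a ω) ∂μ ∧
      ∀ θ : Ω → ℝ, MemLp θ 2 μ → (∫ ω, θ ω ∂μ) = 0 →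
        (∫ ω, a ω * (p + θ ω) ^ 2 ∂μ) ≥ p ^ 2 / ∫ ω, (1 / a ω) ∂μ := by
  intro θ₀
  set I := ∫ ω, 1 / a ω ∂μ
  have hpos : ∀ᵐ ω ∂μ, 0 < a ω ∧ a ω ≤ M := by
    filter_upwards [hbd] with ω hω using ⟨hm.trans_le hω.1, hω.2⟩
  have hw (q : ENNReal) : MemLp (fun ω => 1 / a ω) q μ :=
    memLp_one_div_of_le hm ha_meas.aemeasurable (hbd.mono fun _ h => h.1) q
  have hw_int : Integrable (fun ω => 1 / a ω) μ := (hw 1).integrable le_rfl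
  have hI : 0 < I :=
    (one_div_pos.mpr (hm.trans_le hmM)).trans_le
      (one_div_le_integral_one_div hw_int hpos)
  have hθ₀ : θ₀ = fun ω => p / I * (1 / a ω) - p := by
    funext ω
    have : p + θ₀ ω = p / I * (1 / a ω) := by
      change p + p * (1 / (a ω * I) - 1) = _
      rw [mul_sub, mul_one, add_sub_cancel, mul_one_div, mul_one_div, div_div, mul_comm]
    linarith
  refine ⟨?memLp, ?mean, ?value, fun θ hθ hmean => ?minimal⟩
  case memLp => exact hθ₀ ▸ ((hw 2).const_mul _).sub (memLp_const p)
  case mean =>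
    rw [hθ₀, integral_sub (hw_int.const_mul _) (integrable_const p),
      integral_const_mul, integral_const, probReal_univ, one_smul, div_mul_cancel₀ p hI.ne',
      sub_self]
  case value =>
    simp only [hθ₀, add_sub_cancel]
    rw [integral_mul_sq_const_mul_one_div (hpos.mono fun _ h => h.1.ne'), div_pow,
      div_mul_eq_mul_div, sq I, mul_div_mul_right _ _ hI.ne']
  case minimal =>
    have hf : MemLp (fun ω => p + θ ω) 2 μ := (memLp_const p).add hθ
    have haf : Integrable (fun ω => a ω * (p + θ ω) ^ 2) μ :=
      hf.integrable_sq.bdd_mul ha_meas.aestronglyMeasurable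
        (hpos.mono fun _ h => by rw [Real.norm_eq_abs, abs_of_pos h.1]; exact h.2)
    have hf_mean : ∫ ω, p + θ ω ∂μ = p := by
      rw [integral_add (integrable_const p) (hθ.integrable one_le_two), hmean, integral_const,
        probReal_univ, one_smul, add_zero]
    simpa only [hf_mean] using sq_integral_div_integral_one_div_le (hpos.mono fun _ h => h.1)
      (hf.integrable one_le_two) haf hw_int hI
end

section
/- Let (Ω, μ) be a probability space, ã : Ω → ℝ measurable with 0 < m ≤ ã ≤ M a.e., p ∈ ℝ, p ≠ 0. If θ ∈ L²(Ω) satisfies ∫θ dμ = 0 and ∫ ã(p+θ)² dμ = p²/∫(1/ã)dμ, then θ = p·(1/(ã·∫(1/ã)dμ) − 1) almost everywhere. In particular, if ã is a.e. constant, then θ = 0 almost everywhere. -/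
/-!
With `c = ∫ 1/ã` and `u = p + θ`, so that `∫ u = p`, completing the square gives
`∫ ã (u - (p/c)/ã)² = ∫ ã u² - 2 (p/c) ∫ u + (p/c)² c = J(θ) - p²/c`.
When `J(θ) = p²/c` the nonnegative integrand on the left integrates to zero, hence vanishes
a.e., and since `ã > 0` this forces `u = p/(c ã)` a.e.
-/

open MeasureTheory

section WeightedSquare

variable {Ω : Type*} [MeasurableSpace Ω] {μ : Measure Ω}

theorem ae_eq_of_integral_mul_sub_sq_eq_zero {w f g : Ω → ℝ} (hw : ∀ᵐ ω ∂μ, 0 < w ω)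
    (hint : Integrable (fun ω => w ω * (f ω - g ω) ^ 2) μ)
    (h : ∫ ω, w ω * (f ω - g ω) ^ 2 ∂μ = 0) : f =ᵐ[μ] g := by
  have hnonneg : 0 ≤ᵐ[μ] fun ω => w ω * (f ω - g ω) ^ 2 :=
    hw.mono fun ω hω => by positivity
  filter_upwards [(integral_eq_zero_iff_of_nonneg_ae hnonneg hint).mp h, hw] with ω h0 hω
  have hsq : (f ω - g ω) ^ 2 = 0 := (mul_eq_zero.mp h0).resolve_left hω.ne'
  exact sub_eq_zero.mp (pow_eq_zero_iff two_ne_zero |>.mp hsq)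

theorem mul_sub_div_sq_ae_eq {a u : Ω → ℝ} (t : ℝ) (ha : ∀ᵐ ω ∂μ, a ω ≠ 0) :
    (fun ω => a ω * (u ω - t / a ω) ^ 2) =ᵐ[μ]
      fun ω => a ω * u ω ^ 2 - 2 * t * u ω + t ^ 2 * (1 / a ω) := by
  filter_upwards [ha] with ω hω
  field_simp
  ring

variable {a u : Ω → ℝ}

theorem integrable_mul_sub_div_sq (t : ℝ) (ha : ∀ᵐ ω ∂μ, a ω ≠ 0)
    (hau : Integrable (fun ω => a ω * u ω ^ 2) μ) (hu : Integrable u μ)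
    (ha_inv : Integrable (fun ω => 1 / a ω) μ) :
    Integrable (fun ω => a ω * (u ω - t / a ω) ^ 2) μ :=
  ((hau.sub (hu.const_mul _)).add (ha_inv.const_mul _)).congr (mul_sub_div_sq_ae_eq t ha).symm

theorem integral_mul_sub_div_sq (t : ℝ) (ha : ∀ᵐ ω ∂μ, a ω ≠ 0)
    (hau : Integrable (fun ω => a ω * u ω ^ 2) μ) (hu : Integrable u μ)
    (ha_inv : Integrable (fun ω => 1 / a ω) μ) :
    ∫ ω, a ω * (u ω - t / a ω) ^ 2 ∂μ =
      ∫ ω, a ω * u ω ^ 2 ∂μ - 2 * t * ∫ ω, u ω ∂μ + t ^ 2 * ∫ ω, 1 / a ω ∂μ := by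
  have hquad : Integrable (fun ω => a ω * u ω ^ 2 - 2 * t * u ω) μ := hau.sub (hu.const_mul _)
  rw [integral_congr_ae (mul_sub_div_sq_ae_eq t ha), integral_add hquad (ha_inv.const_mul _),
    integral_sub hau (hu.const_mul _), integral_const_mul, integral_const_mul]

theorem ae_eq_div_of_integral_mul_sq_eq {p : ℝ} (ha : ∀ᵐ ω ∂μ, 0 < a ω)
    (hau : Integrable (fun ω => a ω * u ω ^ 2) μ) (hu : Integrable u μ)
    (ha_inv : Integrable (fun ω => 1 / a ω) μ) (hmean : ∫ ω, u ω ∂μ = p)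
    (hmin : ∫ ω, a ω * u ω ^ 2 ∂μ = p ^ 2 / ∫ ω, 1 / a ω ∂μ) :
    u =ᵐ[μ] fun ω => p / (∫ ω', 1 / a ω' ∂μ) / a ω := by
  have ha_ne : ∀ᵐ ω ∂μ, a ω ≠ 0 := ha.mono fun _ h => h.ne'
  set c := ∫ ω, 1 / a ω ∂μ
  refine ae_eq_of_integral_mul_sub_sq_eq_zero ha
    (integrable_mul_sub_div_sq (p / c) ha_ne hau hu ha_inv) ?_
  rw [integral_mul_sub_div_sq (p / c) ha_ne hau hu ha_inv, hmean, hmin]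
  rcases eq_or_ne c 0 with hc | hc
  · simp [hc]
  · field_simp
    ring

theorem integrable_one_div_of_le [IsFiniteMeasure μ] {m : ℝ} (ha : AEMeasurable a μ)
    (hm : 0 < m) (hma : ∀ᵐ ω ∂μ, m ≤ a ω) : Integrable (fun ω => 1 / a ω) μ := by
  refine Integrable.mono' (integrable_const (1 / m)) (ha.const_div 1).aestronglyMeasurable ?_
  filter_upwards [hma] with ω h
  rw [Real.norm_eq_abs, abs_of_pos (by have := hm.trans_le h; positivity)]
  exact one_div_le_one_div_of_le hm h

end WeightedSquare

theorem stmt_4_general {Ω : Type*} [MeasurableSpace Ω] (μ : Measure Ω) [IsProbabilityMeasure μ]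
    (a : Ω → ℝ) (ha_meas : Measurable a) (m M : ℝ) (hm : 0 < m)
    (hbd : ∀ᵐ ω ∂μ, m ≤ a ω ∧ a ω ≤ M) (p : ℝ)
    (θ : Ω → ℝ) (hθ : MemLp θ 2 μ) (hmean : (∫ ω, θ ω ∂μ) = 0)
    (hmin : (∫ ω, a ω * (p + θ ω) ^ 2 ∂μ) = p ^ 2 / ∫ ω, (1 / a ω) ∂μ) :
    (θ =ᵐ[μ] fun ω => p * (1 / (a ω * ∫ ω', (1 / a ω') ∂μ) - 1)) ∧
      ∀ a₀ : ℝ, (a =ᵐ[μ] fun _ => a₀) → θ =ᵐ[μ] fun _ => (0 : ℝ) := by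
  have ha_pos : ∀ᵐ ω ∂μ, 0 < a ω := hbd.mono fun _ h => hm.trans_le h.1
  have hu : MemLp (fun ω => p + θ ω) 2 μ := (memLp_const p).add hθ
  have hau : Integrable (fun ω => a ω * (p + θ ω) ^ 2) μ :=
    hu.integrable_sq.bdd_mul ha_meas.aestronglyMeasurable
      (ha_pos.and hbd |>.mono fun _ h => (abs_of_pos h.1).trans_le h.2.2)
  have hu_mean : ∫ ω, (p + θ ω) ∂μ = p := by
    rw [integral_add (integrable_const p) (hθ.integrable one_le_two), hmean]
    simp
  have hsol := ae_eq_div_of_integral_mul_sq_eq ha_pos hau (hu.integrable one_le_two)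
    (integrable_one_div_of_le ha_meas.aemeasurable hm (hbd.mono fun _ h => h.1)) hu_mean hmin
  have hθ_eq : θ =ᵐ[μ] fun ω => p * (1 / (a ω * ∫ ω', (1 / a ω') ∂μ) - 1) :=
    hsol.mono fun ω h => by linear_combination h
  refine ⟨hθ_eq, fun a₀ ha₀ => hθ_eq.trans ?_⟩
  obtain ⟨ω₀, hω₀, hω₀_pos⟩ := (ha₀.and ha_pos).exists
  have hc : ∫ ω, 1 / a ω ∂μ = 1 / a₀ := by
    rw [integral_congr_ae (ha₀.mono fun ω h => by rw [h])]
    simp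
  filter_upwards [ha₀] with ω h
  rw [h, hc, mul_one_div_cancel (hω₀ ▸ hω₀_pos).ne']
  simp

/-- Uniqueness of the minimizer: if a zero-mean `θ ∈ L²` achieves the minimal value
`p²/∫(1/ã)` of `θ ↦ ∫ ã (p+θ)²` with `p ≠ 0`, then `θ = p (1/(ã ∫(1/ã)) − 1)` a.e.;
in particular if `ã` is a.e. constant then `θ = 0` a.e. -/
theorem stmt_4 {Ω : Type*} [MeasurableSpace Ω] (μ : Measure Ω) [IsProbabilityMeasure μ]
    (a : Ω → ℝ) (ha_meas : Measurable a) (m M : ℝ) (hm : 0 < m) (hmM : m ≤ M)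
    (hbd : ∀ᵐ ω ∂μ, m ≤ a ω ∧ a ω ≤ M) (p : ℝ) (hp : p ≠ 0)
    (θ : Ω → ℝ) (hθ : MemLp θ 2 μ) (hmean : (∫ ω, θ ω ∂μ) = 0)
    (hmin : (∫ ω, a ω * (p + θ ω) ^ 2 ∂μ) = p ^ 2 / ∫ ω, (1 / a ω) ∂μ) :
    (θ =ᵐ[μ] fun ω => p * (1 / (a ω * ∫ ω', (1 / a ω') ∂μ) - 1)) ∧
      ∀ a₀ : ℝ, (a =ᵐ[μ] fun _ => a₀) → θ =ᵐ[μ] fun _ => (0 : ℝ) :=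
  stmt_4_general μ a ha_meas m M hm hbd p θ hθ hmean hmin
end

section
/- Let φ, ψ : ℝ → (0,∞) be C² functions and a : ℝ → (0,∞) be C¹. Define α = √(φψ) and θ = −φ'/(2φ) + ψ'/(2ψ). Suppose for constants p, λ, and functions c : ℝ → ℝ: (aφ')' − 2pa·φ' + (c + p²a − pa')φ = λφ and (aψ')' + 2pa·ψ' + (c + p²a + pa')ψ = λψ on ℝ. Then (aα')' + (c + a(p+θ)²)α = λα on ℝ. -/
/-!
In terms of the logarithmic derivatives `u = φ'/φ` and `v = ψ'/ψ`, a second-order equation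
`(a f')' + b f' + V f = λ f` for a nonvanishing `f` is equivalent to the Riccati equation
`a' ℓ + a (ℓ' + ℓ²) + b ℓ + V = λ` for `ℓ = f'/f`. The logarithmic derivative of `α = √(φψ)` is
`(u + v)/2`, and `θ = (v - u)/2`. Averaging the Riccati equations of `φ` and `ψ`, the terms
`∓ p a'` cancel, `- 2 p a u` and `2 p a v` combine to `2 p a θ`, and
`(u² + v²)/2 = ((u + v)/2)² + θ²`; the result is the Riccati equation of `α` with potential
`c + a (p + θ)²`.
-/

theorem deriv_eq_mul_logDeriv {f : ℝ → ℝ} {x : ℝ} (hf0 : f x ≠ 0) :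
    deriv f x = f x * logDeriv f x := by
  rw [logDeriv_apply, mul_div_cancel₀ _ hf0]

theorem hasDerivAt_mul_deriv_of_logDeriv {a f : ℝ → ℝ} {x a' ℓ' : ℝ} (hf0 : ∀ y, f y ≠ 0)
    (ha : HasDerivAt a a' x) (hf : DifferentiableAt ℝ f x)
    (hℓ : HasDerivAt (logDeriv f) ℓ' x) :
    HasDerivAt (fun y => a y * deriv f y)
      (f x * (a' * logDeriv f x + a x * (ℓ' + logDeriv f x ^ 2))) x := by
  simp_rw [deriv_eq_mul_logDeriv (hf0 _)]
  exact (ha.mul (hf.hasDerivAt.mul hℓ)).congr_deriv <| by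
    rw [deriv_eq_mul_logDeriv (hf0 x), Pi.mul_apply]
    ring

theorem sturmLiouville_iff_riccati {a f : ℝ → ℝ} {x b V lam : ℝ} (hf0 : ∀ y, f y ≠ 0)
    (ha : DifferentiableAt ℝ a x) (hf : DifferentiableAt ℝ f x)
    (hℓ : DifferentiableAt ℝ (logDeriv f) x) :
    deriv (fun y => a y * deriv f y) x + b * deriv f x + V * f x = lam * f x ↔
      deriv a x * logDeriv f x + a x * (deriv (logDeriv f) x + logDeriv f x ^ 2)
        + b * logDeriv f x + V = lam := by
  rw [(hasDerivAt_mul_deriv_of_logDeriv hf0 ha.hasDerivAt hf hℓ.hasDerivAt).deriv,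
    deriv_eq_mul_logDeriv (hf0 x)]
  constructor
  · intro h
    apply mul_left_cancel₀ (hf0 x)
    linear_combination h
  · intro h
    linear_combination f x * h

theorem logDeriv_sqrt_mul {f g : ℝ → ℝ} (hf : Differentiable ℝ f) (hg : Differentiable ℝ g)
    (hfg : ∀ y, 0 < f y * g y) :
    logDeriv (fun y => √(f y * g y)) = fun y => (logDeriv f y + logDeriv g y) / 2 := by
  funext y
  have hf0 : f y ≠ 0 := left_ne_zero_of_mul (hfg y).ne'
  have hg0 : g y ≠ 0 := right_ne_zero_of_mul (hfg y).ne'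
  have hsq : (fun z => √(f z * g z) ^ 2) = fun z => f z * g z :=
    funext fun z => Real.sq_sqrt (hfg z).le
  have h := logDeriv_fun_pow (f := fun z => √(f z * g z)) (((hf y).mul (hg y)).sqrt (hfg y).ne') 2
  rw [hsq, logDeriv_mul y hf0 hg0 (hf y) (hg y)] at h
  push_cast at h
  linarith

theorem hasDerivAt_logDeriv_sqrt_mul {f g : ℝ → ℝ} {x : ℝ} (hf : Differentiable ℝ f)
    (hg : Differentiable ℝ g) (hfg : ∀ y, 0 < f y * g y)
    (hℓf : DifferentiableAt ℝ (logDeriv f) x) (hℓg : DifferentiableAt ℝ (logDeriv g) x) :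
    HasDerivAt (logDeriv fun y => √(f y * g y))
      ((deriv (logDeriv f) x + deriv (logDeriv g) x) / 2) x := by
  rw [logDeriv_sqrt_mul hf hg hfg]
  exact (hℓf.hasDerivAt.add hℓg.hasDerivAt).div_const 2

theorem ContDiff.differentiable_logDeriv {f : ℝ → ℝ} (hf : ContDiff ℝ 2 f) (hf0 : ∀ y, f y ≠ 0) :
    Differentiable ℝ (logDeriv f) := fun y => by
  simpa only [logDeriv] using
    (hf.differentiable_deriv_two y).div (hf.differentiable two_ne_zero y) (hf0 y)

theorem stmt_13_general (a c φ ψ α θ : ℝ → ℝ) (p lam : ℝ)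
    (ha : ContDiff ℝ 1 a)
    (hφ : ContDiff ℝ 2 φ) (hφ_pos : ∀ x, 0 < φ x)
    (hψ : ContDiff ℝ 2 ψ) (hψ_pos : ∀ x, 0 < ψ x)
    (hα : ∀ x, α x = Real.sqrt (φ x * ψ x))
    (hθ : ∀ x, θ x = -(deriv φ x) / (2 * φ x) + deriv ψ x / (2 * ψ x))
    (heqφ : ∀ x, deriv (fun y => a y * deriv φ y) x - 2 * p * a x * deriv φ x
      + (c x + p ^ 2 * a x - p * deriv a x) * φ x = lam * φ x)
    (heqψ : ∀ x, deriv (fun y => a y * deriv ψ y) x + 2 * p * a x * deriv ψ x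
      + (c x + p ^ 2 * a x + p * deriv a x) * ψ x = lam * ψ x) :
    ∀ x, deriv (fun y => a y * deriv α y) x + (c x + a x * (p + θ x) ^ 2) * α x
      = lam * α x := by
  intro x
  obtain rfl : α = fun y => √(φ y * ψ y) := funext hα
  have had : Differentiable ℝ a := ha.differentiable one_ne_zero
  have hφd : Differentiable ℝ φ := hφ.differentiable two_ne_zero
  have hψd : Differentiable ℝ ψ := hψ.differentiable two_ne_zero
  have hφ0 : ∀ y, φ y ≠ 0 := fun y => (hφ_pos y).ne'
  have hψ0 : ∀ y, ψ y ≠ 0 := fun y => (hψ_pos y).ne'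
  have hφψ : ∀ y, 0 < φ y * ψ y := fun y => mul_pos (hφ_pos y) (hψ_pos y)
  have hu := hφ.differentiable_logDeriv hφ0 x
  have hv := hψ.differentiable_logDeriv hψ0 x
  have hriccatiφ := (sturmLiouville_iff_riccati (lam := lam) (b := -(2 * p * a x))
    (V := c x + p ^ 2 * a x - p * deriv a x) hφ0 (had x) (hφd x) hu).mp
    (by linear_combination heqφ x)
  have hriccatiψ := (sturmLiouville_iff_riccati (lam := lam) (b := 2 * p * a x)
    (V := c x + p ^ 2 * a x + p * deriv a x) hψ0 (had x) (hψd x) hv).mp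
    (by linear_combination heqψ x)
  have hθuv : θ x = (logDeriv ψ x - logDeriv φ x) / 2 := by
    rw [hθ, logDeriv_apply, logDeriv_apply]
    ring
  have hℓα := hasDerivAt_logDeriv_sqrt_mul hφd hψd hφψ hu hv
  have hriccatiα : deriv a x * logDeriv (fun y => √(φ y * ψ y)) x
      + a x * (deriv (logDeriv fun y => √(φ y * ψ y)) x
        + logDeriv (fun y => √(φ y * ψ y)) x ^ 2)
      + 0 * logDeriv (fun y => √(φ y * ψ y)) x + (c x + a x * (p + θ x) ^ 2) = lam := by
    rw [hℓα.deriv, logDeriv_sqrt_mul hφd hψd hφψ, hθuv]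
    linear_combination (hriccatiφ + hriccatiψ) / 2
  simpa only [zero_mul, add_zero] using (sturmLiouville_iff_riccati
    (fun y => (Real.sqrt_pos.mpr (hφψ y)).ne') (had x) (((hφd x).mul (hψd x)).sqrt (hφψ x).ne')
    hℓα.differentiableAt).mpr hriccatiα

/-- The pair of conjugate eigenfunction equations for `L_p` and `L_{-p}` yields the
self-adjoint equation `(aα')' + (c + a(p+θ)²)α = λα` for `α = √(φψ)`,
`θ = −φ'/(2φ) + ψ'/(2ψ)`. -/
theorem stmt_13 (a c φ ψ α θ : ℝ → ℝ) (p lam : ℝ)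
    (ha : ContDiff ℝ 1 a) (ha_pos : ∀ x, 0 < a x)
    (hφ : ContDiff ℝ 2 φ) (hφ_pos : ∀ x, 0 < φ x)
    (hψ : ContDiff ℝ 2 ψ) (hψ_pos : ∀ x, 0 < ψ x)
    (hc : Continuous c)
    (hα : ∀ x, α x = Real.sqrt (φ x * ψ x))
    (hθ : ∀ x, θ x = -(deriv φ x) / (2 * φ x) + deriv ψ x / (2 * ψ x))
    (heqφ : ∀ x, deriv (fun y => a y * deriv φ y) x - 2 * p * a x * deriv φ x
      + (c x + p ^ 2 * a x - p * deriv a x) * φ x = lam * φ x)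
    (heqψ : ∀ x, deriv (fun y => a y * deriv ψ y) x + 2 * p * a x * deriv ψ x
      + (c x + p ^ 2 * a x + p * deriv a x) * ψ x = lam * ψ x) :
    ∀ x, deriv (fun y => a y * deriv α y) x + (c x + a x * (p + θ x) ^ 2) * α x
      = lam * α x :=
  stmt_13_general a c φ ψ α θ p lam ha hφ hφ_pos hψ hψ_pos hα hθ heqφ heqψ
end

section
/- Let a, φ : ℝ → ℝ with a ∈ C¹, a > 0 bounded, φ ∈ C² positive, φ'/φ bounded, and suppose (aφ')' + cφ ≤ λφ on ℝ for a continuous bounded function c and constant λ. Then for every R > 0: 2Rλ ≥ a(R)φ'(R)/φ(R) − a(−R)φ'(−R)/φ(−R) + ∫_{−R}^{R} a(x)(φ'(x)/φ(x))² dx + ∫_{−R}^{R} c(x) dx. Consequently, if (1/(2R))∫_{−R}^{R} c(x)dx → c̄ as R → ∞, then λ ≥ c̄. -/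
open Filter Topology intervalIntegral

/-! Dividing `(aφ')' + cφ ≤ λφ` by `φ > 0` and using `(aφ'/φ)' = (aφ')'/φ - a(φ'/φ)²` gives
`(aφ'/φ)' + a(φ'/φ)² + c ≤ λ` pointwise for the flux `aφ'/φ`; integrating over `[-R, R]` yields
the inequality for every `R`. Since `a` and `φ'/φ` are bounded, the boundary term
`[aφ'/φ]_{-R}^R` is `O(1)`, and the term `∫ a(φ'/φ)² ≥ 0` can be dropped, so the averages of `c`
are at most `λ + O(1/R)`. -/

section Flux

variable {a φ : ℝ → ℝ} {x : ℝ}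

theorem hasDerivAt_flux_div (ha : DifferentiableAt ℝ a x) (hφ : DifferentiableAt ℝ φ x)
    (hφ' : DifferentiableAt ℝ (deriv φ) x) (hφx : φ x ≠ 0) :
    HasDerivAt (fun y => a y * deriv φ y / φ y)
      (deriv (fun y => a y * deriv φ y) x / φ x - a x * (deriv φ x / φ x) ^ 2) x :=
  ((ha.fun_mul hφ').hasDerivAt.fun_div hφ.hasDerivAt hφx).congr_deriv (by field_simp)

theorem flux_sub_add_integral_le {c : ℝ → ℝ} {lam u v : ℝ} (huv : u ≤ v)
    (ha : Differentiable ℝ a) (hφ : Differentiable ℝ φ) (hφ' : Differentiable ℝ (deriv φ))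
    (hφ_pos : ∀ x, 0 < φ x) (hc : Continuous c)
    (hineq : ∀ x, deriv (fun y => a y * deriv φ y) x + c x * φ x ≤ lam * φ x) :
    a v * deriv φ v / φ v - a u * deriv φ u / φ u
      + (∫ x in u..v, a x * (deriv φ x / φ x) ^ 2) + (∫ x in u..v, c x) ≤ (v - u) * lam := by
  have hφ_ne : ∀ x, φ x ≠ 0 := fun x => (hφ_pos x).ne'
  have hflux x := hasDerivAt_flux_div (ha x) (hφ x) (hφ' x) (hφ_ne x)
  have hsq_cont : Continuous fun x => a x * (deriv φ x / φ x) ^ 2 :=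
    ha.continuous.mul ((hφ'.continuous.div hφ.continuous hφ_ne).pow 2)
  have hrhs_cont : Continuous fun x => lam - a x * (deriv φ x / φ x) ^ 2 - c x :=
    (continuous_const.sub hsq_cont).sub hc
  have hderiv_le : ∀ x, deriv (fun y => a y * deriv φ y) x / φ x - a x * (deriv φ x / φ x) ^ 2
      ≤ lam - a x * (deriv φ x / φ x) ^ 2 - c x := by
    intro x
    have : deriv (fun y => a y * deriv φ y) x / φ x ≤ lam - c x := by
      rw [div_le_iff₀ (hφ_pos x)]
      linarith [hineq x]
    linarith
  have hFTC := sub_le_integral_of_hasDeriv_right_of_le huv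
    (fun x _ => (hflux x).continuousAt.continuousWithinAt)
    (fun x _ => (hflux x).hasDerivWithinAt) hrhs_cont.integrableOn_Icc
    (fun x _ => hderiv_le x)
  rw [integral_sub (f := fun x => lam - a x * (deriv φ x / φ x) ^ 2)
      ((continuous_const.sub hsq_cont).intervalIntegrable _ _) (hc.intervalIntegrable _ _),
    integral_sub intervalIntegrable_const (hsq_cont.intervalIntegrable _ _),
    integral_const, smul_eq_mul] at hFTC
  linarith

end Flux

theorem le_of_tendsto_average {I : ℝ → ℝ} {lam K cbar : ℝ}
    (hI : ∀ R > 0, I R ≤ 2 * R * lam + K)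
    (htend : Tendsto (fun R => (1 / (2 * R)) * I R) atTop (𝓝 cbar)) : cbar ≤ lam := by
  have hupper : Tendsto (fun R : ℝ => lam + K / 2 / R) atTop (𝓝 lam) := by
    simpa using (tendsto_const_nhds (x := lam)).add (tendsto_const_nhds.div_atTop tendsto_id)
  refine le_of_tendsto_of_tendsto htend hupper ?_
  filter_upwards [eventually_gt_atTop 0] with R hR
  have hbound : (lam + K / 2 / R) * (2 * R) = 2 * R * lam + K := by field_simp
  rw [one_div_mul_eq_div, div_le_iff₀ (by positivity), hbound]
  exact hI R hR

theorem stmt_16_general (a c φ : ℝ → ℝ) (lam A₀ M : ℝ)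
    (ha : ContDiff ℝ 1 a) (ha_pos : ∀ x, 0 < a x) (ha_bd : ∀ x, a x ≤ A₀)
    (hφ : ContDiff ℝ 2 φ) (hφ_pos : ∀ x, 0 < φ x)
    (hφ_log : ∀ x, |deriv φ x / φ x| ≤ M)
    (hc : Continuous c)
    (hineq : ∀ x, deriv (fun y => a y * deriv φ y) x + c x * φ x ≤ lam * φ x) :
    (∀ R > (0 : ℝ),
      2 * R * lam ≥ a R * deriv φ R / φ R - a (-R) * deriv φ (-R) / φ (-R)
        + (∫ x in (-R)..R, a x * (deriv φ x / φ x) ^ 2)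
        + ∫ x in (-R)..R, c x) ∧
      ∀ cbar : ℝ,
        Tendsto (fun R => (1 / (2 * R)) * ∫ x in (-R)..R, c x) atTop (𝓝 cbar) →
        lam ≥ cbar := by
  have hmain : ∀ R > (0 : ℝ), a R * deriv φ R / φ R - a (-R) * deriv φ (-R) / φ (-R)
      + (∫ x in (-R)..R, a x * (deriv φ x / φ x) ^ 2) + (∫ x in (-R)..R, c x)
      ≤ 2 * R * lam := by
    intro R hR
    convert flux_sub_add_integral_le (u := -R) (v := R) (by linarith)
      (ha.differentiable one_ne_zero) (hφ.differentiable two_ne_zero) hφ.differentiable_deriv_two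
      hφ_pos hc hineq using 1
    ring
  have hflux_bd : ∀ x, |a x * deriv φ x / φ x| ≤ A₀ * M := fun x => by
    rw [mul_div_assoc, abs_mul, abs_of_pos (ha_pos x)]
    exact mul_le_mul (ha_bd x) (hφ_log x) (abs_nonneg _) ((ha_pos x).le.trans (ha_bd x))
  refine ⟨hmain, fun cbar htend => le_of_tendsto_average (K := 2 * (A₀ * M)) ?_ htend⟩
  intro R hR
  have hsq_nonneg : 0 ≤ ∫ x in (-R)..R, a x * (deriv φ x / φ x) ^ 2 :=
    integral_nonneg (by linarith) fun x _ => mul_nonneg (ha_pos x).le (sq_nonneg _)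
  linarith [hmain R hR, (abs_le.mp (hflux_bd R)).1, (abs_le.mp (hflux_bd (-R))).2]

/-- Integration of the inequality `(aφ')' + cφ ≤ λφ` divided by `φ`: for every `R > 0`,
`2Rλ ≥ [aφ'/φ]_{-R}^R + ∫_{-R}^R a(φ'/φ)² + ∫_{-R}^R c`; consequently, if the averages
of `c` converge to `c̄`, then `λ ≥ c̄`. -/
theorem stmt_16 (a c φ : ℝ → ℝ) (lam A₀ M C₀ : ℝ)
    (ha : ContDiff ℝ 1 a) (ha_pos : ∀ x, 0 < a x) (ha_bd : ∀ x, a x ≤ A₀)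
    (hφ : ContDiff ℝ 2 φ) (hφ_pos : ∀ x, 0 < φ x)
    (hφ_log : ∀ x, |deriv φ x / φ x| ≤ M)
    (hc : Continuous c) (hc_bd : ∀ x, |c x| ≤ C₀)
    (hineq : ∀ x, deriv (fun y => a y * deriv φ y) x + c x * φ x ≤ lam * φ x) :
    (∀ R > (0 : ℝ),
      2 * R * lam ≥ a R * deriv φ R / φ R - a (-R) * deriv φ (-R) / φ (-R)
        + (∫ x in (-R)..R, a x * (deriv φ x / φ x) ^ 2)
        + ∫ x in (-R)..R, c x) ∧
      ∀ cbar : ℝ,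
        Tendsto (fun R => (1 / (2 * R)) * ∫ x in (-R)..R, c x) atTop (𝓝 cbar) →
        lam ≥ cbar :=
  stmt_16_general a c φ lam A₀ M ha ha_pos ha_bd hφ hφ_pos hφ_log hc hineq
end
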